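/- Let A, B be nonempty subsets of [n] with |A| + |B| ≤ n, and set A' = A \ A^t, B' = B \ B^t (removing the maximal tail intervals ending at n). Then the pair (A, B) is maximal (i.e., ℒ([n],A,|A|) and ℒ([n],B,|B|) are cross intersecting and each is maximal with respect to the other) if and only if A' is the partner of B' (A' ∩ B' = {q}, A' ∪ B' = [q] for some q). -/

import Mathlib

open Finset

/-- Lexicographic order on finite sets: `A ≼ B` iff `A ⊇ B` or `min (A \ B) < min (B \ A)`. -/
def lexLE (A B : Finset ℕ) : Prop := B ⊆ A ∨ (A \ B).min < (B \ A).min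

instance : DecidableRel lexLE := fun A B => by unfold lexLE; infer_instance

/-- The family of all `k`-element subsets of `[n] = {1,…,n}`. -/
def ksubsets (n k : ℕ) : Finset (Finset ℕ) := (Finset.Icc 1 n).powersetCard k

/-- Two families are cross intersecting. -/
def crossInt (A B : Finset (Finset ℕ)) : Prop := ∀ X ∈ A, ∀ Y ∈ B, (X ∩ Y).Nonempty

/-- `ℒ([n], R, k)`: all `k`-subsets of `[n]` lexicographically no more than `R`. -/
def Lfam (n : ℕ) (R : Finset ℕ) (k : ℕ) : Finset (Finset ℕ) :=
  (ksubsets n k).filter (fun F => lexLE F R)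

/-- `ℒ([n], r, k)`: the first `r` sets of `binomial([n],k)` in lexicographic order. -/
def Lnum (n r k : ℕ) : Finset (Finset ℕ) :=
  (ksubsets n k).filter (fun F => ((ksubsets n k).filter (fun G => lexLE G F)).card ≤ r)

/-- `F` and `H` are partners: they strongly intersect at their last element. -/
def isPartner (F H : Finset ℕ) : Prop := ∃ q, F ∩ H = {q} ∧ F ∪ H = Finset.Icc 1 q

/-- `K` is the `k`-partner of `F` (inside `[n]`). -/
def isKPartner (n : ℕ) (F : Finset ℕ) (k : ℕ) (K : Finset ℕ) : Prop :=
  ∃ H, isPartner F H ∧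
    ((k = H.card ∧ K = H) ∨
     (H.card < k ∧ K = H ∪ Finset.Icc (n - k + H.card + 1) n) ∨
     (k < H.card ∧ K ∈ ksubsets n k ∧ lexLE K H ∧
        ∀ K' ∈ ksubsets n k, lexLE K' H → lexLE K' K))

/-- `ℓ(F)`: the length of the maximal tail interval `[n-ℓ+1, n] ⊆ F`. -/
def tailLen (n : ℕ) (F : Finset ℕ) : ℕ :=
  ((Finset.range (n + 1)).filter (fun x => Finset.Icc (n - x + 1) n ⊆ F)).sup id

/-- `F^t = [n - ℓ(F) + 1, n]`. -/
def tailSet (n : ℕ) (F : Finset ℕ) : Finset ℕ := Finset.Icc (n - tailLen n F + 1) n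

/-- `𝒜` (a family of `f`-subsets of `[n]`) is maximal with respect to `ℬ`. -/
def maximalTo (n f : ℕ) (A B : Finset (Finset ℕ)) : Prop :=
  ∀ A' ⊆ ksubsets n f, A ⊆ A' → crossInt A' B → A' = A

/-- The pair of sets `(A, B)` is maximal. -/
def pairMaximal (n : ℕ) (A B : Finset ℕ) : Prop :=
  crossInt (Lfam n A A.card) (Lfam n B B.card) ∧
  maximalTo n A.card (Lfam n A A.card) (Lfam n B B.card) ∧
  maximalTo n B.card (Lfam n B B.card) (Lfam n A A.card)

/-- `A` is the `|A|`-parity of `B`: same set after removing tails, and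
`ℓ(B) - ℓ(A) = |B| - |A|` (stated additively). -/
def isParity (n : ℕ) (A B : Finset ℕ) : Prop :=
  A \ tailSet n A = B \ tailSet n B ∧ tailLen n A + B.card = tailLen n B + A.card

/-- strict lex-smaller witness form -/
def SL (U V : Finset ℕ) : Prop := ∃ m, m ∈ U ∧ m ∉ V ∧ ∀ j < m, (j ∈ U ↔ j ∈ V)

lemma lexLE_refl (U : Finset ℕ) : lexLE U U := Or.inl (subset_refl U)

lemma SL_lexLE {U V : Finset ℕ} (h : SL U V) : lexLE U V := by
  obtain ⟨m, hmU, hmV, hag⟩ := h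
  right
  have h1 : (U \ V).min ≤ (m : ℕ∞) := Finset.min_le (by simp [Finset.mem_sdiff, hmU, hmV])
  have h2 : ((m : ℕ∞) + 1) ≤ (V \ U).min := by
    apply Finset.le_min
    intro b hb
    simp only [Finset.mem_sdiff] at hb
    have hbm : m < b := by
      rcases lt_trichotomy b m with h' | h' | h'
      · exact absurd ((hag b h').mpr hb.1) hb.2
      · exact absurd (h' ▸ hb.1) hmV
      · exact h'
    have : ((m+1 : ℕ) : ℕ∞) ≤ ((b : ℕ) : ℕ∞) := by exact_mod_cast Nat.succ_le_of_lt hbm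
    exact this
  have hlt : (m : ℕ∞) < (m : ℕ∞) + 1 := by
    have : ((m : ℕ) : ℕ∞) < ((m+1 : ℕ) : ℕ∞) := by exact_mod_cast Nat.lt_succ_self m
    simpa using this
  exact lt_of_le_of_lt h1 (lt_of_lt_of_le hlt h2)

lemma SL_of_min_lt {U V : Finset ℕ} (h : (U \ V).min < (V \ U).min) : SL U V := by
  have hne : (U \ V).Nonempty := by
    rcases (U \ V).eq_empty_or_nonempty with he | hne
    · rw [he] at h; simp at h
    · exact hne
  set m := (U \ V).min' hne with hm
  have hmmin : ((m : ℕ∞)) = (U \ V).min := Finset.coe_min' hne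
  have hmem : m ∈ U \ V := Finset.min'_mem _ hne
  simp only [Finset.mem_sdiff] at hmem
  refine ⟨m, hmem.1, hmem.2, ?_⟩
  intro j hj
  constructor
  · intro hjU
    by_contra hjV
    have : m ≤ j := Finset.min'_le _ _ (by simp [Finset.mem_sdiff, hjU, hjV])
    omega
  · intro hjV
    by_contra hjU
    have h3 : (V \ U).min ≤ (j : ℕ∞) := Finset.min_le (by simp [Finset.mem_sdiff, hjV, hjU])
    have h4 : ((m : ℕ∞)) < (j : ℕ∞) := lt_of_lt_of_le (hmmin ▸ h) h3
    have : m < j := by exact_mod_cast h4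
    omega

lemma lexLE_iff {U V : Finset ℕ} (hc : U.card = V.card) : lexLE U V ↔ U = V ∨ SL U V := by
  constructor
  · rintro (h | h)
    · exact Or.inl (Finset.eq_of_subset_of_card_le h hc.le).symm
    · exact Or.inr (SL_of_min_lt h)
  · rintro (rfl | h)
    · exact lexLE_refl U
    · exact SL_lexLE h

lemma SL_or {U V : Finset ℕ} (hc : U.card = V.card) (hne : U ≠ V) : SL U V ∨ SL V U := by
  have h1 : (U \ V).Nonempty := by
    rw [Finset.sdiff_nonempty]
    intro hs
    exact hne (Finset.eq_of_subset_of_card_le hs hc.ge)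
  have h2 : (V \ U).Nonempty := by
    rw [Finset.sdiff_nonempty]
    intro hs
    exact hne (Finset.eq_of_subset_of_card_le hs hc.le).symm
  set m1 := (U \ V).min' h1
  set m2 := (V \ U).min' h2
  have hm1 : m1 ∈ U \ V := Finset.min'_mem _ h1
  have hm2 : m2 ∈ V \ U := Finset.min'_mem _ h2
  simp only [Finset.mem_sdiff] at hm1 hm2
  have hagree : ∀ j < min m1 m2, (j ∈ U ↔ j ∈ V) := by
    intro j hj
    rw [lt_min_iff] at hj
    constructor
    · intro hU; by_contra hV
      have : m1 ≤ j := Finset.min'_le _ _ (by simp [Finset.mem_sdiff, hU, hV])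
      omega
    · intro hV; by_contra hU
      have : m2 ≤ j := Finset.min'_le _ _ (by simp [Finset.mem_sdiff, hV, hU])
      omega
  rcases lt_trichotomy m1 m2 with h | h | h
  · left; exact ⟨m1, hm1.1, hm1.2, fun j hj => hagree j (by omega)⟩
  · exact absurd (h ▸ hm1.1) hm2.2
  · right; exact ⟨m2, hm2.1, hm2.2, fun j hj => (hagree j (by omega)).symm⟩

lemma SL_asymm {U V : Finset ℕ} (h1 : SL U V) (h2 : SL V U) : False := by
  obtain ⟨m1, hm1U, hm1V, hag1⟩ := h1
  obtain ⟨m2, hm2V, hm2U, hag2⟩ := h2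
  rcases lt_trichotomy m1 m2 with h | h | h
  · exact hm1V ((hag2 m1 h).mpr hm1U)
  · exact hm2U (h ▸ hm1U)
  · exact hm2U ((hag1 m2 h).mpr hm2V)


/-- partition predicate -/
def Pp (X B : Finset ℕ) : Prop :=
  ∃ r, r ∈ X ∧ r ∈ B ∧ ∀ j, 0 < j → j < r → (j ∈ X ↔ j ∉ B)

lemma Pp_symm {X B : Finset ℕ} (h : Pp X B) : Pp B X := by
  obtain ⟨r, h1, h2, h3⟩ := h
  exact ⟨r, h2, h1, fun j hj hjr => by have := h3 j hj hjr; tauto⟩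

/-- an initial segment of any finset, of any smaller size -/
lemma exists_initial_subset (C : Finset ℕ) (b : ℕ) (hb : b ≤ C.card) :
    ∃ Y ⊆ C, Y.card = b ∧ ∀ y ∈ Y, ∀ c ∈ C, c < y → c ∈ Y := by
  induction b with
  | zero => exact ⟨∅, empty_subset _, card_empty, by simp⟩
  | succ b ih =>
    obtain ⟨Y, hYC, hYcard, hYinit⟩ := ih (by omega)
    have hne : (C \ Y).Nonempty := by
      rw [← Finset.card_pos, Finset.card_sdiff_of_subset hYC]; omega
    set m := (C \ Y).min' hne with hm
    have hmem : m ∈ C \ Y := Finset.min'_mem _ hne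
    simp only [Finset.mem_sdiff] at hmem
    refine ⟨insert m Y, Finset.insert_subset hmem.1 hYC, ?_, ?_⟩
    · rw [Finset.card_insert_of_notMem hmem.2, hYcard]
    · intro y hy c hc hcy
      rcases Finset.mem_insert.mp hy with rfl | hy
      · by_cases hcY : c ∈ Y
        · exact Finset.mem_insert_of_mem hcY
        · have : m ≤ c := Finset.min'_le _ _ (by simp [Finset.mem_sdiff, hc, hcY])
          omega
      · exact Finset.mem_insert_of_mem (hYinit y hy c hc hcy)


lemma tailLen_mem (n : ℕ) (F : Finset ℕ) :
    tailLen n F ≤ n ∧ Finset.Icc (n - tailLen n F + 1) n ⊆ F := by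
  have hne : ((Finset.range (n + 1)).filter (fun x => Finset.Icc (n - x + 1) n ⊆ F)).Nonempty := by
    refine ⟨0, ?_⟩
    simp only [Finset.mem_filter, Finset.mem_range]
    refine ⟨by omega, ?_⟩
    rw [Finset.Icc_eq_empty (by omega)]
    exact Finset.empty_subset _
  obtain ⟨b, hb, hsup⟩ := Finset.exists_mem_eq_sup _ hne id
  simp only [Finset.mem_filter, Finset.mem_range] at hb
  unfold tailLen
  rw [hsup]
  simp only [id_eq]
  exact ⟨by omega, hb.2⟩

lemma tailLen_ge {n k : ℕ} {F : Finset ℕ} (hk : k ≤ n) (h : Finset.Icc (n - k + 1) n ⊆ F) :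
    k ≤ tailLen n F :=
  Finset.le_sup (f := id) (by simp only [Finset.mem_filter, Finset.mem_range]; exact ⟨by omega, h⟩)

lemma tailLen_eq {n k : ℕ} {F : Finset ℕ} (hk : k ≤ n)
    (h1 : Finset.Icc (n - k + 1) n ⊆ F) (h2 : n - k ∉ F) : tailLen n F = k := by
  refine le_antisymm ?_ (tailLen_ge hk h1)
  by_contra hlt
  push_neg at hlt
  have := tailLen_mem n F
  have : n - k ∈ Finset.Icc (n - tailLen n F + 1) n := by
    simp only [Finset.mem_Icc]
    omega
  exact h2 (tailLen_mem n F |>.2 this)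


lemma meets_of_Pp {n : ℕ} {X B Y : Finset ℕ} (hY : Y ⊆ Finset.Icc 1 n)
    (hYc : Y.card = B.card) (hYB : lexLE Y B) (h : Pp X B) : (X ∩ Y).Nonempty := by
  obtain ⟨r, hrX, hrB, hpart⟩ := h
  rcases (lexLE_iff hYc).mp hYB with rfl | ⟨m, hmY, hmB, hag⟩
  · exact ⟨r, Finset.mem_inter.mpr ⟨hrX, hrB⟩⟩
  · have hm1 : 0 < m := by have := hY hmY; simp [Finset.mem_Icc] at this; omega
    rcases lt_trichotomy m r with h' | h' | h'
    · have : m ∈ X := (hpart m hm1 h').mpr hmB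
      exact ⟨m, Finset.mem_inter.mpr ⟨this, hmY⟩⟩
    · subst h'; exact absurd hrB hmB
    · have : r ∈ Y := (hag r h').mpr hrB
      exact ⟨r, Finset.mem_inter.mpr ⟨hrX, this⟩⟩

lemma Pp_of_meets {n : ℕ} {X B : Finset ℕ} (hX : X ⊆ Finset.Icc 1 n)
    (hB : B ⊆ Finset.Icc 1 n) (hcard : X.card + B.card ≤ n)
    (hmeets : ∀ Y, Y ⊆ Finset.Icc 1 n → Y.card = B.card → lexLE Y B → (X ∩ Y).Nonempty) :
    Pp X B := by
  set C := Finset.Icc 1 n \ X with hC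
  have hXcard : X.card ≤ n := by
    have := Finset.card_le_card hX
    simpa [Nat.card_Icc] using this
  have hCcard : B.card ≤ C.card := by
    rw [hC, Finset.card_sdiff_of_subset hX]
    simp [Nat.card_Icc]; omega
  obtain ⟨Y₀, hY₀C, hY₀card, hY₀init⟩ := exists_initial_subset C B.card hCcard
  have hY₀Icc : Y₀ ⊆ Finset.Icc 1 n := hY₀C.trans (Finset.sdiff_subset)
  have hY₀X : ∀ y ∈ Y₀, y ∉ X := by
    intro y hy
    have := hY₀C hy
    simp only [hC, Finset.mem_sdiff] at this
    exact this.2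
  by_cases hlex : lexLE Y₀ B
  · obtain ⟨z, hz⟩ := hmeets Y₀ hY₀Icc hY₀card hlex
    simp only [Finset.mem_inter] at hz
    exact absurd hz.1 (hY₀X z hz.2)
  · have hne : Y₀ ≠ B := by rintro rfl; exact hlex (lexLE_refl _)
    rcases SL_or hY₀card hne with hSL | ⟨r, hrB, hrY, hag⟩
    · exact absurd (SL_lexLE hSL) hlex
    · -- SL B Y₀ : r ∈ B \ Y₀, agreement below r
      by_cases hex : ∃ y ∈ Y₀, r < y
      · obtain ⟨y, hyY, hry⟩ := hex
        have hrX : r ∈ X := by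
          by_contra hrX
          have hrC : r ∈ C := by
            simp only [hC, Finset.mem_sdiff]
            exact ⟨hB hrB, hrX⟩
          exact hrY (hY₀init y hyY r hrC hry)
        refine ⟨r, hrX, hrB, ?_⟩
        intro j hj0 hjr
        have hjn : j ∈ Finset.Icc 1 n := by
          have := hB hrB
          simp only [Finset.mem_Icc] at this ⊢
          omega
        constructor
        · intro hjX hjB
          have hjY : j ∈ Y₀ := (hag j hjr).mp hjB
          exact hY₀X j hjY hjX
        · intro hjB
          by_contra hjX
          have hjC : j ∈ C := by simp only [hC, Finset.mem_sdiff]; exact ⟨hjn, hjX⟩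
          have hjY : j ∈ Y₀ := hY₀init y hyY j hjC (by omega)
          exact hjB ((hag j hjr).mpr hjY)
      · push_neg at hex
        have hYB : Y₀ ⊆ B := by
          intro y hy
          have hyr : y ≤ r := hex y hy
          have hyner : y ≠ r := fun h => hrY (h ▸ hy)
          exact (hag y (by omega)).mpr hy
        have : Y₀ = B := Finset.eq_of_subset_of_card_le hYB (by omega)
        exact absurd (this ▸ hrB) hrY


lemma tail_absorb {n : ℕ} {X A : Finset ℕ} (hX : X ⊆ Finset.Icc 1 n)
    (hA : A ⊆ Finset.Icc 1 n) (hc : X.card = A.card) {m : ℕ} (hmA : m ∈ A) (hmX : m ∉ X)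
    (htail : Finset.Icc m n ⊆ A) (hag : ∀ j < m, (j ∈ X ↔ j ∈ A)) : False := by
  have hm : 1 ≤ m ∧ m ≤ n := by simpa [Finset.mem_Icc] using hA hmA
  have e1 : X ∩ Finset.Icc 1 (m-1) = A ∩ Finset.Icc 1 (m-1) := by
    ext j
    simp only [Finset.mem_inter, Finset.mem_Icc]
    constructor
    · rintro ⟨h1, h2, h3⟩; exact ⟨(hag j (by omega)).mp h1, h2, h3⟩
    · rintro ⟨h1, h2, h3⟩; exact ⟨(hag j (by omega)).mpr h1, h2, h3⟩
  have splitc : ∀ S : Finset ℕ, S ⊆ Finset.Icc 1 n →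
      S.card = (S ∩ Finset.Icc 1 (m-1)).card + (S ∩ Finset.Icc m n).card := by
    intro S hS
    rw [← Finset.card_union_of_disjoint]
    · congr 1
      ext j
      simp only [Finset.mem_union, Finset.mem_inter, Finset.mem_Icc]
      constructor
      · intro hj
        have := hS hj
        simp only [Finset.mem_Icc] at this
        by_cases hjm : j ≤ m - 1
        · exact Or.inl ⟨hj, this.1, hjm⟩
        · exact Or.inr ⟨hj, by omega, this.2⟩
      · rintro (⟨h, _⟩ | ⟨h, _⟩) <;> exact h
    · rw [Finset.disjoint_left]
      intro j hj1 hj2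
      simp only [Finset.mem_inter, Finset.mem_Icc] at hj1 hj2
      omega
  have eA : A ∩ Finset.Icc m n = Finset.Icc m n := Finset.inter_eq_right.mpr htail
  have c1 := splitc X hX
  have c2 := splitc A hA
  rw [eA] at c2
  have hXm : (X ∩ Finset.Icc m n).card = (Finset.Icc m n).card := by
    rw [e1] at c1; omega
  have : X ∩ Finset.Icc m n = Finset.Icc m n :=
    Finset.eq_of_subset_of_card_le Finset.inter_subset_right hXm.ge
  have hmm : m ∈ X ∩ Finset.Icc m n := by
    rw [this]; simp [Finset.mem_Icc]; omega
  exact hmX (Finset.mem_inter.mp hmm).1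

lemma key_backward {n : ℕ} {A B : Finset ℕ} (hA : A ⊆ Finset.Icc 1 n)
    (hB : B ⊆ Finset.Icc 1 n) (hcard : A.card + B.card ≤ n)
    {q : ℕ} (hq1 : (A \ tailSet n A) ∩ (B \ tailSet n B) = {q})
    (hq2 : (A \ tailSet n A) ∪ (B \ tailSet n B) = Finset.Icc 1 q) :
    ∀ X, X ⊆ Finset.Icc 1 n → X.card = A.card → (lexLE X A ↔ Pp X B) := by
  set lA := tailLen n A with hlA
  set lB := tailLen n B with hlB
  set A' := A \ tailSet n A with hA'
  set B' := B \ tailSet n B with hB'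
  have hTA : Finset.Icc (n - lA + 1) n ⊆ A := (tailLen_mem n A).2
  have hTB : Finset.Icc (n - lB + 1) n ⊆ B := (tailLen_mem n B).2
  have hlAn : lA ≤ n := (tailLen_mem n A).1
  have hlBn : lB ≤ n := (tailLen_mem n B).1
  have memA : ∀ j, j ∈ A ↔ (j ∈ A' ∨ (n - lA + 1 ≤ j ∧ j ≤ n)) := by
    intro j
    constructor
    · intro hj
      by_cases hjt : j ∈ Finset.Icc (n - lA + 1) n
      · right; simpa [Finset.mem_Icc] using hjt
      · left; rw [hA']; unfold tailSet; rw [← hlA]; exact Finset.mem_sdiff.mpr ⟨hj, hjt⟩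
    · rintro (hj | hj)
      · exact (Finset.sdiff_subset) hj
      · exact hTA (Finset.mem_Icc.mpr hj)
  have memB : ∀ j, j ∈ B ↔ (j ∈ B' ∨ (n - lB + 1 ≤ j ∧ j ≤ n)) := by
    intro j
    constructor
    · intro hj
      by_cases hjt : j ∈ Finset.Icc (n - lB + 1) n
      · right; simpa [Finset.mem_Icc] using hjt
      · left; rw [hB']; unfold tailSet; rw [← hlB]; exact Finset.mem_sdiff.mpr ⟨hj, hjt⟩
    · rintro (hj | hj)
      · exact (Finset.sdiff_subset) hj
      · exact hTB (Finset.mem_Icc.mpr hj)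
  have hA'q : A' ⊆ Finset.Icc 1 q := hq2 ▸ Finset.subset_union_left
  have hB'q : B' ⊆ Finset.Icc 1 q := hq2 ▸ Finset.subset_union_right
  have hqA' : q ∈ A' ∧ q ∈ B' := by
    have : q ∈ A' ∩ B' := by rw [hq1]; exact Finset.mem_singleton_self q
    exact Finset.mem_inter.mp this
  have hqA : q ∈ A := Finset.sdiff_subset hqA'.1
  have hqB : q ∈ B := Finset.sdiff_subset hqA'.2
  have cardIA : (Finset.Icc (n - lA + 1) n).card = lA := by rw [Nat.card_Icc]; omega
  have cardIB : (Finset.Icc (n - lB + 1) n).card = lB := by rw [Nat.card_Icc]; omega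
  have cardA : A.card = A'.card + lA := by
    have h1 : A'.card = A.card - lA := by
      rw [hA']; unfold tailSet; rw [← hlA, Finset.card_sdiff_of_subset hTA, cardIA]
    have h2 : lA ≤ A.card := by
      have := Finset.card_le_card hTA; omega
    omega
  have cardB : B.card = B'.card + lB := by
    have h1 : B'.card = B.card - lB := by
      rw [hB']; unfold tailSet; rw [← hlB, Finset.card_sdiff_of_subset hTB, cardIB]
    have h2 : lB ≤ B.card := by
      have := Finset.card_le_card hTB; omega
    omega
  have hq_sum : A'.card + B'.card = q + 1 := by
    have := Finset.card_union_add_card_inter A' B'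
    rw [hq1, hq2] at this
    simp [Nat.card_Icc] at this
    have hq1' : 1 ≤ q := by
      have := hA'q hqA'.1; simp [Finset.mem_Icc] at this; omega
    omega
  have hQN : q + 1 + lA + lB ≤ n := by omega
  have hq1n : 1 ≤ q := by
    have := hA'q hqA'.1; simp [Finset.mem_Icc] at this; omega
  -- main partition below q
  have W : ∀ j, 0 < j → j < q → (j ∈ A ↔ j ∉ B) := by
    intro j hj0 hjq
    constructor
    · intro hjA hjB
      have hjA' : j ∈ A' := by
        rcases (memA j).mp hjA with h | h
        · exact h
        · omega
      have hjB' : j ∈ B' := by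
        rcases (memB j).mp hjB with h | h
        · exact h
        · omega
      have : j ∈ A' ∩ B' := Finset.mem_inter.mpr ⟨hjA', hjB'⟩
      rw [hq1] at this
      simp at this
      omega
    · intro hjB
      have : j ∈ A' ∪ B' := hq2 ▸ (by simp [Finset.mem_Icc]; omega)
      rcases Finset.mem_union.mp this with h | h
      · exact Finset.sdiff_subset h
      · exact absurd (Finset.sdiff_subset h) hjB
  have PpAB : Pp A B := ⟨q, hqA, hqB, W⟩
  intro X hX hXc
  constructor
  · -- lexLE X A → Pp X B
    intro hlex
    rcases (lexLE_iff hXc).mp hlex with rfl | ⟨m, hmX, hmA, hag⟩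
    · exact PpAB
    · have hm1 : 1 ≤ m ∧ m ≤ n := by simpa [Finset.mem_Icc] using hX hmX
      rcases lt_trichotomy m q with hmq | hmq | hmq
      · -- m < q : m ∈ B'
        have hmB : m ∈ B := by
          have : m ∈ A' ∪ B' := hq2 ▸ (by simp [Finset.mem_Icc]; omega)
          rcases Finset.mem_union.mp this with h | h
          · exact absurd (Finset.sdiff_subset h) hmA
          · exact Finset.sdiff_subset h
        refine ⟨m, hmX, hmB, ?_⟩
        intro j hj0 hjm
        rw [hag j hjm]
        exact W j hj0 (by omega)
      · exact absurd (hmq ▸ hqA) hmA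
      · -- m > q : q ∈ X
        have hqX : q ∈ X := (hag q hmq).mpr hqA
        refine ⟨q, hqX, hqB, ?_⟩
        intro j hj0 hjq
        rw [hag j (by omega)]
        exact W j hj0 hjq
  · -- Pp X B → lexLE X A
    rintro ⟨r, hrX, hrB, hp⟩
    by_cases hXA : X = A
    · exact hXA ▸ lexLE_refl A
    rcases SL_or hXc hXA with hSL | ⟨m, hmA, hmX, hag⟩
    · exact SL_lexLE hSL
    · -- SL A X : m ∈ A \ X, agreement below m — derive False
      exfalso
      have hagX : ∀ j < m, (j ∈ X ↔ j ∈ A) := fun j hj => (hag j hj).symm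
      by_cases hmtail : n - lA + 1 ≤ m
      · -- m in the tail of A
        exact tail_absorb hX hA hXc hmA hmX
          (fun j hj => by
            have := Finset.mem_Icc.mp hj
            exact (memA j).mpr (Or.inr ⟨by omega, this.2⟩)) hagX
      · push_neg at hmtail
        have hmA' : m ∈ A' := by
          rcases (memA m).mp hmA with h | h
          · exact h
          · omega
        have hmq : m ≤ q := by
          have := hA'q hmA'; simp [Finset.mem_Icc] at this; omega
        have hm1 : 1 ≤ m := by
          have := hA hmA; simp [Finset.mem_Icc] at this; omega
        have hrn : 1 ≤ r ∧ r ≤ n := by simpa [Finset.mem_Icc] using hB hrB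
        rcases lt_trichotomy m r with hmr | hmr | hmr
        · -- m < r
          have hmB : m ∈ B := by
            by_contra hmB
            exact ((hp m hm1 hmr).mpr hmB) |> hmX
          have hmB' : m ∈ B' := by
            rcases (memB m).mp hmB with h | h
            · exact h
            · omega
          have hmq' : m = q := by
            have : m ∈ A' ∩ B' := Finset.mem_inter.mpr ⟨hmA', hmB'⟩
            rw [hq1] at this; simpa using this
          rw [hmq'] at hmX hagX hmr hmA'
          -- now q = q < r, q ∈ A \ X, r ∈ X ∩ B, r in tail of B
          have hrtail : n - lB + 1 ≤ r := by
            rcases (memB r).mp hrB with h | h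
            · have := hB'q h; simp [Finset.mem_Icc] at this; omega
            · exact h.1
          -- X contains (A'.erase q) ∪ Icc (q+1) (n - lB) ∪ {r}, too many elements
          set U := (A'.erase q) ∪ (Finset.Icc (q+1) (n - lB) ∪ {r}) with hU
          have hUX : U ⊆ X := by
            intro j hj
            rw [hU] at hj
            simp only [Finset.mem_union, Finset.mem_erase, Finset.mem_Icc,
              Finset.mem_singleton] at hj
            rcases hj with ⟨hjm, hjA'⟩ | ⟨hj1, hj2⟩ | rfl
            · have hjq : j ≤ q := by
                have := hA'q hjA'; simp [Finset.mem_Icc] at this; omega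
              exact (hagX j (by omega)).mpr (Finset.sdiff_subset hjA')
            · -- q < j ≤ n - lB : j ∉ B so j ∈ X by partition (j < r)
              have hjB : j ∉ B := by
                intro hjB
                rcases (memB j).mp hjB with h | h
                · have := hB'q h; simp [Finset.mem_Icc] at this; omega
                · omega
              exact (hp j (by omega) (by omega)).mpr hjB
            · exact hrX
          have hcardU : U.card = (A'.card - 1) + ((n - lB - q) + 1) := by
            rw [hU]
            rw [Finset.card_union_of_disjoint, Finset.card_union_of_disjoint]
            · rw [Finset.card_erase_of_mem hmA', Nat.card_Icc, Finset.card_singleton]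
              omega
            · rw [Finset.disjoint_left]
              intro j hj1 hj2
              simp only [Finset.mem_Icc] at hj1
              simp only [Finset.mem_singleton] at hj2
              omega
            · rw [Finset.disjoint_left]
              intro j hj1 hj2
              have hjq : j ≤ q := by
                have := hA'q (Finset.mem_of_mem_erase hj1)
                simp [Finset.mem_Icc] at this; omega
              simp only [Finset.mem_union, Finset.mem_Icc, Finset.mem_singleton] at hj2
              rcases hj2 with ⟨h1, _⟩ | rfl <;> omega
          have hle := Finset.card_le_card hUX
          have hA'pos : 1 ≤ A'.card := Finset.card_pos.mpr ⟨q, hqA'.1⟩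
          rw [hcardU, hXc, cardA] at hle
          omega
        · exact hmX (hmr ▸ hrX)
        · -- m > r
          have hrA : r ∈ A := (hag r hmr).mpr hrX
          rcases (memA r).mp hrA with hrA' | hrt
          · rcases (memB r).mp hrB with hrB' | hrt
            · have : r = q := by
                have : r ∈ A' ∩ B' := Finset.mem_inter.mpr ⟨hrA', hrB'⟩
                rw [hq1] at this; simpa using this
              omega
            · have := hA'q hrA'; simp [Finset.mem_Icc] at this; omega
          · omega


lemma forward_side {n : ℕ} {A B : Finset ℕ} (hA : A ⊆ Finset.Icc 1 n)
    (hB : B ⊆ Finset.Icc 1 n) (hcard : A.card + B.card ≤ n)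
    {r : ℕ} (hrA : r ∈ A) (hrB : r ∈ B)
    (hpart : ∀ j, 0 < j → j < r → (j ∈ A ↔ j ∉ B))
    (hsum : (A ∩ Finset.Icc 1 r).card + (B ∩ Finset.Icc 1 r).card = r + 1)
    (MA : ∀ X, X ⊆ Finset.Icc 1 n → X.card = A.card → Pp X B → lexLE X A) :
    A \ tailSet n A = A ∩ Finset.Icc 1 r := by
  have hrn : 1 ≤ r ∧ r ≤ n := by simpa [Finset.mem_Icc] using hA hrA
  set cA := (A ∩ Finset.Icc 1 r).card with hcA
  set kA := A.card - cA with hkA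
  have hcAa : cA ≤ A.card := Finset.card_le_card Finset.inter_subset_left
  have hcBb : (B ∩ Finset.Icc 1 r).card ≤ B.card := Finset.card_le_card Finset.inter_subset_left
  have hrk : r + 1 ≤ n - kA := by omega
  have hkAn : kA ≤ n := by omega
  set X := (A ∩ Finset.Icc 1 r) ∪ Finset.Icc (n - kA + 1) n with hXdef
  have hXsub : X ⊆ Finset.Icc 1 n := by
    rw [hXdef]
    apply Finset.union_subset (Finset.inter_subset_left.trans hA)
    intro j hj
    simp only [Finset.mem_Icc] at hj ⊢
    omega
  have hdisj : Disjoint (A ∩ Finset.Icc 1 r) (Finset.Icc (n - kA + 1) n) := by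
    rw [Finset.disjoint_left]
    intro j hj1 hj2
    simp only [Finset.mem_inter, Finset.mem_Icc] at hj1 hj2
    omega
  have hXcard : X.card = A.card := by
    rw [hXdef, Finset.card_union_of_disjoint hdisj, Nat.card_Icc]
    omega
  have hPpX : Pp X B := by
    refine ⟨r, ?_, hrB, ?_⟩
    · exact Finset.mem_union_left _ (Finset.mem_inter.mpr ⟨hrA, by simp [Finset.mem_Icc]; omega⟩)
    · intro j hj0 hjr
      have hmem : j ∈ X ↔ j ∈ A := by
        rw [hXdef]
        simp only [Finset.mem_union, Finset.mem_inter, Finset.mem_Icc]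
        constructor
        · rintro (⟨h, _⟩ | ⟨h1, h2⟩)
          · exact h
          · omega
        · intro h; exact Or.inl ⟨h, by omega, by omega⟩
      rw [hmem]
      exact hpart j hj0 hjr
  have hlex := MA X hXsub hXcard hPpX
  have hXA : X = A := by
    rcases (lexLE_iff hXcard).mp hlex with h | ⟨m, hmX, hmA, hag⟩
    · exact h
    · exfalso
      have hmI : n - kA + 1 ≤ m := by
        rw [hXdef] at hmX
        rcases Finset.mem_union.mp hmX with h | h
        · exact absurd ((Finset.mem_inter.mp h).1) hmA
        · exact (Finset.mem_Icc.mp h).1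
      have hAX : ¬ A ⊆ X := by
        intro hs
        exact hmA ((Finset.eq_of_subset_of_card_le hs hXcard.le) ▸ hmX)
      obtain ⟨s, hsA, hsX⟩ := Finset.not_subset.mp hAX
      have hsn : 1 ≤ s ∧ s ≤ n := by simpa [Finset.mem_Icc] using hA hsA
      have hsr : ¬ (s ≤ r) := by
        intro hsr
        exact hsX (hXdef ▸ Finset.mem_union_left _
          (Finset.mem_inter.mpr ⟨hsA, by simp [Finset.mem_Icc]; omega⟩))
      have hsk : s ≤ n - kA := by
        by_contra h
        exact hsX (hXdef ▸ Finset.mem_union_right _ (by simp [Finset.mem_Icc]; omega))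
      exact hsX ((hag s (by omega)).mpr hsA)
  have hAeq : A = (A ∩ Finset.Icc 1 r) ∪ Finset.Icc (n - kA + 1) n := by
    conv_lhs => rw [← hXA]
  have htl : tailLen n A = kA := by
    apply tailLen_eq hkAn
    · conv_rhs => rw [hAeq]
      exact Finset.subset_union_right
    · intro h
      conv at h => rw [hAeq]
      rcases Finset.mem_union.mp h with h | h
      · have := (Finset.mem_inter.mp h).2
        simp only [Finset.mem_Icc] at this
        omega
      · simp only [Finset.mem_Icc] at h
        omega
  unfold tailSet
  rw [htl]
  ext j
  simp only [Finset.mem_sdiff, Finset.mem_inter, Finset.mem_Icc]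
  constructor
  · intro ⟨hjA, hjI⟩
    refine ⟨hjA, ?_⟩
    have := hA hjA
    simp only [Finset.mem_Icc] at this
    conv at hjA => rw [hAeq]
    rcases Finset.mem_union.mp hjA with h | h
    · have := (Finset.mem_inter.mp h).2
      simp only [Finset.mem_Icc] at this
      omega
    · simp only [Finset.mem_Icc] at h
      omega
  · intro ⟨hjA, hj1, hjr⟩
    exact ⟨hjA, by omega⟩



lemma mem_ksubsets {n k : ℕ} {X : Finset ℕ} :
    X ∈ ksubsets n k ↔ X ⊆ Finset.Icc 1 n ∧ X.card = k := Finset.mem_powersetCard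

lemma mem_Lfam {n k : ℕ} {R X : Finset ℕ} :
    X ∈ Lfam n R k ↔ (X ⊆ Finset.Icc 1 n ∧ X.card = k) ∧ lexLE X R := by
  unfold Lfam
  rw [Finset.mem_filter, mem_ksubsets]

theorem stmt11 (n : ℕ) (A B : Finset ℕ)
    (hA : A ⊆ Finset.Icc 1 n) (hB : B ⊆ Finset.Icc 1 n)
    (hAne : A.Nonempty) (hBne : B.Nonempty)
    (hcard : A.card + B.card ≤ n) :
    pairMaximal n A B ↔ isPartner (A \ tailSet n A) (B \ tailSet n B) := by
  constructor
  · rintro ⟨hcross, hmaxA, hmaxB⟩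
    have hALfam : A ∈ Lfam n A A.card := mem_Lfam.mpr ⟨⟨hA, rfl⟩, lexLE_refl A⟩
    have hBLfam : B ∈ Lfam n B B.card := mem_Lfam.mpr ⟨⟨hB, rfl⟩, lexLE_refl B⟩
    have hPpAB : Pp A B := by
      apply Pp_of_meets hA hB hcard
      intro Y h1 h2 h3
      exact hcross A hALfam Y (mem_Lfam.mpr ⟨⟨h1, h2⟩, h3⟩)
    have MA : ∀ X, X ⊆ Finset.Icc 1 n → X.card = A.card → Pp X B → lexLE X A := by
      intro X h1 h2 h3
      have hFk : insert X (Lfam n A A.card) ⊆ ksubsets n A.card :=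
        Finset.insert_subset (mem_ksubsets.mpr ⟨h1, h2⟩) (Finset.filter_subset _ _)
      have hFcross : crossInt (insert X (Lfam n A A.card)) (Lfam n B B.card) := by
        intro X' hX' Y hY
        obtain ⟨⟨hY1, hY2⟩, hY3⟩ := mem_Lfam.mp hY
        rcases Finset.mem_insert.mp hX' with rfl | hX'
        · exact meets_of_Pp hY1 hY2 hY3 h3
        · exact hcross X' hX' Y hY
      have heq := hmaxA _ hFk (Finset.subset_insert _ _) hFcross
      have : X ∈ Lfam n A A.card := heq ▸ Finset.mem_insert_self _ _
      exact (mem_Lfam.mp this).2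
    have MB : ∀ Y, Y ⊆ Finset.Icc 1 n → Y.card = B.card → Pp Y A → lexLE Y B := by
      intro Y h1 h2 h3
      have hFk : insert Y (Lfam n B B.card) ⊆ ksubsets n B.card :=
        Finset.insert_subset (mem_ksubsets.mpr ⟨h1, h2⟩) (Finset.filter_subset _ _)
      have hFcross : crossInt (insert Y (Lfam n B B.card)) (Lfam n A A.card) := by
        intro Y' hY' X hX
        obtain ⟨⟨hX1, hX2⟩, hX3⟩ := mem_Lfam.mp hX
        rcases Finset.mem_insert.mp hY' with rfl | hY'
        · exact meets_of_Pp hX1 hX2 hX3 h3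
        · rw [Finset.inter_comm]
          exact hcross X hX Y' hY'
      have heq := hmaxB _ hFk (Finset.subset_insert _ _) hFcross
      have : Y ∈ Lfam n B B.card := heq ▸ Finset.mem_insert_self _ _
      exact (mem_Lfam.mp this).2
    obtain ⟨r, hrA, hrB, hpart⟩ := hPpAB
    have hrn : 1 ≤ r ∧ r ≤ n := by simpa [Finset.mem_Icc] using hA hrA
    have hU : (A ∩ Finset.Icc 1 r) ∪ (B ∩ Finset.Icc 1 r) = Finset.Icc 1 r := by
      ext j
      simp only [Finset.mem_union, Finset.mem_inter, Finset.mem_Icc]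
      constructor
      · rintro (⟨_, h⟩ | ⟨_, h⟩) <;> exact h
      · rintro ⟨h1, h2⟩
        rcases eq_or_lt_of_le h2 with rfl | h2'
        · exact Or.inl ⟨hrA, h1, le_rfl⟩
        · by_cases hjA : j ∈ A
          · exact Or.inl ⟨hjA, h1, h2⟩
          · have : j ∈ B := by
              by_contra hjB
              exact hjA ((hpart j (by omega) h2').mpr hjB)
            exact Or.inr ⟨this, h1, h2⟩
    have hI : (A ∩ Finset.Icc 1 r) ∩ (B ∩ Finset.Icc 1 r) = {r} := by
      ext j
      simp only [Finset.mem_inter, Finset.mem_Icc, Finset.mem_singleton]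
      constructor
      · rintro ⟨⟨hjA, _, hjr⟩, ⟨hjB, hj1, _⟩⟩
        rcases eq_or_lt_of_le hjr with h | h
        · exact h
        · exact absurd hjB ((hpart j (by omega) h).mp hjA)
      · rintro rfl
        exact ⟨⟨hrA, hrn.1, le_rfl⟩, ⟨hrB, hrn.1, le_rfl⟩⟩
    have hsum : (A ∩ Finset.Icc 1 r).card + (B ∩ Finset.Icc 1 r).card = r + 1 := by
      have := Finset.card_union_add_card_inter (A ∩ Finset.Icc 1 r) (B ∩ Finset.Icc 1 r)
      rw [hU, hI] at this
      simp [Nat.card_Icc] at this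
      omega
    have hApart := forward_side hA hB hcard hrA hrB hpart hsum MA
    have hBpart := forward_side hB hA (by omega) hrB hrA
      (fun j hj0 hjr => by have := hpart j hj0 hjr; tauto)
      (by omega) MB
    refine ⟨r, ?_, ?_⟩
    · rw [hApart, hBpart]; exact hI
    · rw [hApart, hBpart]; exact hU
  · rintro ⟨q, hq1, hq2⟩
    have keyA := key_backward hA hB hcard hq1 hq2
    have keyB := key_backward hB hA (by omega)
      (by rw [Finset.inter_comm]; exact hq1) (by rw [Finset.union_comm]; exact hq2)
    have hcross : crossInt (Lfam n A A.card) (Lfam n B B.card) := by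
      intro X hX Y hY
      obtain ⟨⟨hX1, hX2⟩, hX3⟩ := mem_Lfam.mp hX
      obtain ⟨⟨hY1, hY2⟩, hY3⟩ := mem_Lfam.mp hY
      exact meets_of_Pp hY1 hY2 hY3 ((keyA X hX1 hX2).mp hX3)
    refine ⟨hcross, ?_, ?_⟩
    · intro F hFk hsub hFcross
      refine Finset.Subset.antisymm ?_ hsub
      intro X hXF
      obtain ⟨hX1, hX2⟩ := mem_ksubsets.mp (hFk hXF)
      have hPp : Pp X B := by
        apply Pp_of_meets hX1 hB (by omega)
        intro Y h1 h2 h3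
        exact hFcross X hXF Y (mem_Lfam.mpr ⟨⟨h1, h2⟩, h3⟩)
      exact mem_Lfam.mpr ⟨⟨hX1, hX2⟩, (keyA X hX1 hX2).mpr hPp⟩
    · intro F hFk hsub hFcross
      refine Finset.Subset.antisymm ?_ hsub
      intro Y hYF
      obtain ⟨hY1, hY2⟩ := mem_ksubsets.mp (hFk hYF)
      have hPp : Pp Y A := by
        apply Pp_of_meets hY1 hA (by omega)
        intro X h1 h2 h3
        exact hFcross Y hYF X (mem_Lfam.mpr ⟨⟨h1, h2⟩, h3⟩)
      exact mem_Lfam.mpr ⟨⟨hY1, hY2⟩, (keyB Y hY1 hY2).mpr hPp⟩
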